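/- Let L be a complete enriched Lie algebra. Then L^{(k)} = lim_ℓ L^{(k)}/L^{(k+ℓ)}; in particular L ≅ lim_k L/L^{(k)}, and each quotient L/L^{(k)} is a nilpotent Lie algebra. -/

import Mathlib

section EnrichedPre

variable {L : Type*} [LieRing L] [LieAlgebra ℚ L]

/-- `lcsIn A n` is the span of iterated Lie brackets of length `n+1` with entries in `A`
(so `lcsIn ⊤ (k-1)` is the `k`-th term `L^k` of the lower central series). -/
def lcsIn (A : Submodule ℚ L) : ℕ → Submodule ℚ L
  | 0 => A
  | n + 1 => Submodule.span ℚ {z : L | ∃ x ∈ A, ∃ y ∈ lcsIn A n, ⁅x, y⁆ = z}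

/-- The closure of a subspace `S` in an enriched Lie algebra `(L, {I α})`:
the set of limits of coherent families of elements of `S`, i.e. of those `x`
whose image in each `L ⧸ I α` lies in the image of `S`. -/
def encl {ι : Type*} (I : ι → LieIdeal ℚ L) (S : Submodule ℚ L) : Submodule ℚ L where
  carrier := {x : L | ∀ α, ∃ s ∈ S, x - s ∈ (I α : Submodule ℚ L)}
  add_mem' := by
    intro a b ha hb α
    obtain ⟨s, hs, h1⟩ := ha α
    obtain ⟨t, ht, h2⟩ := hb α
    exact ⟨s + t, S.add_mem hs ht, by
      simpa [add_sub_add_comm] using Submodule.add_mem _ h1 h2⟩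
  zero_mem' := fun α => ⟨0, S.zero_mem, by simp⟩
  smul_mem' := by
    intro c a ha α
    obtain ⟨s, hs, h1⟩ := ha α
    exact ⟨c • s, S.smul_mem c hs, by
      simpa [smul_sub] using Submodule.smul_mem _ c h1⟩

/-- `(L, {I α})` is an enriched Lie algebra: a directed family of ideals with
finite-dimensional nilpotent quotients and trivial intersection. -/
def IsEnriched {ι : Type*} (I : ι → LieIdeal ℚ L) : Prop :=
  (∀ α β, ∃ γ, I γ ≤ I α ⊓ I β) ∧
  (∀ α, FiniteDimensional ℚ (L ⧸ I α)) ∧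
  (∀ α, LieRing.IsNilpotent (L ⧸ I α)) ∧
  (⨅ α, I α) = ⊥

/-- Completeness of `(L, {I α})`: every coherent family in `lim_α L/I α`
(presented by compatible representatives) has a limit in `L`. -/
def IsCompleteWrt {ι : Type*} (I : ι → LieIdeal ℚ L) : Prop :=
  ∀ y : ι → L, (∀ α β, I β ≤ I α → y β - y α ∈ (I α : Submodule ℚ L)) →
    ∃ x : L, ∀ α, x - y α ∈ (I α : Submodule ℚ L)

end EnrichedPre

/-!
Since `L ⧸ I α` is nilpotent, `I α` contains some `L^n`, hence also the closure `L^{(k+l)}` for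
all large `l`. A sequence that is Cauchy for the filtration `L^{(k+l)}` is therefore eventually
constant modulo each `I α`; these eventual values form a coherent family, whose limit (by
completeness) is the limit of the sequence. Limits are unique because `⨅ α, I α = ⊥`.
-/

theorem LieIdeal.exists_lowerCentralSeries_le_of_isNilpotent_quotient {R L : Type*} [CommRing R]
    [LieRing L] [LieAlgebra R L] (J : LieIdeal R L) [LieRing.IsNilpotent (L ⧸ J)] :
    ∃ n, LieModule.lowerCentralSeries R L L n ≤ J := by
  rw [← LieModule.isNilpotent_quotient_iff R L L J, LieModule.isNilpotent_iff R]
  obtain ⟨n, hn⟩ := (LieModule.isNilpotent_iff R (L ⧸ J) (L ⧸ J)).mp ‹_›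
  refine ⟨n, ?_⟩
  rw [← LieSubmodule.toSubmodule_inj, coe_lowerCentralSeries_ideal_quot_eq, hn]
  rfl

section LcsIn

variable {L : Type*} [LieRing L] [LieAlgebra ℚ L]

theorem lcsIn_succ (A : Submodule ℚ L) (n : ℕ) :
    lcsIn A (n + 1) =
      Submodule.span ℚ {z : L | ∃ x ∈ A, ∃ y ∈ lcsIn A n, ⁅x, y⁆ = z} :=
  rfl

theorem lcsIn_top_antitone : Antitone (lcsIn (⊤ : Submodule ℚ L)) := by
  refine antitone_nat_of_succ_le fun n => ?_
  induction n with
  | zero => exact le_top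
  | succ n ih =>
    rw [lcsIn_succ, Submodule.span_le]
    rintro z ⟨x, hx, y, hy, rfl⟩
    exact Submodule.subset_span ⟨x, hx, y, ih hy, rfl⟩

theorem lcsIn_top_le_lowerCentralSeries (n : ℕ) :
    lcsIn (⊤ : Submodule ℚ L) n ≤ LieModule.lowerCentralSeries ℚ L L n := by
  induction n with
  | zero => simp [lcsIn]
  | succ n ih =>
    rw [lcsIn_succ, Submodule.span_le]
    rintro z ⟨x, -, y, hy, rfl⟩
    rw [LieModule.lowerCentralSeries_succ]
    exact LieSubmodule.lie_mem_lie (LieSubmodule.mem_top x) (ih hy)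

theorem exists_lcsIn_top_le (J : LieIdeal ℚ L) [LieRing.IsNilpotent (L ⧸ J)] :
    ∃ n, lcsIn (⊤ : Submodule ℚ L) n ≤ J := by
  obtain ⟨n, hn⟩ := J.exists_lowerCentralSeries_le_of_isNilpotent_quotient
  exact ⟨n, (lcsIn_top_le_lowerCentralSeries n).trans hn⟩

end LcsIn

section Encl

variable {ι L : Type*} [LieRing L] [LieAlgebra ℚ L] {I : ι → LieIdeal ℚ L}

theorem le_encl (S : Submodule ℚ L) : S ≤ encl I S :=
  fun s hs _ => ⟨s, hs, by simp⟩

theorem encl_le_of_le {S : Submodule ℚ L} {α : ι} (h : S ≤ I α) : encl I S ≤ I α := by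
  intro x hx
  obtain ⟨s, hs, hxs⟩ := hx α
  simpa using add_mem hxs (h hs)

theorem mem_encl_of_forall_sub_mem {S : Submodule ℚ L} {x : L}
    (h : ∀ α, ∃ y ∈ encl I S, x - y ∈ (I α : Submodule ℚ L)) : x ∈ encl I S := by
  intro α
  obtain ⟨y, hy, hxy⟩ := h α
  obtain ⟨s, hs, hys⟩ := hy α
  exact ⟨s, hs, by simpa using add_mem hxy hys⟩

variable {S : ℕ → Submodule ℚ L}

theorem exists_sub_mem_encl_of_cauchy (hC : IsCompleteWrt I) (hS : Antitone S)
    (hSI : ∀ α, ∃ n, S n ≤ I α) (y : ℕ → L) (hy : ∀ l, y l ∈ encl I (S 0))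
    (hcauchy : ∀ l m, l ≤ m → y m - y l ∈ encl I (S l)) :
    ∃ x ∈ encl I (S 0), ∀ l, x - y l ∈ encl I (S l) := by
  choose n hn using hSI
  have hyI : ∀ α l m, n α ≤ l → l ≤ m → y m - y l ∈ (I α : Submodule ℚ L) :=
    fun α l m hl hlm => encl_le_of_le ((hS hl).trans (hn α)) (hcauchy l m hlm)
  have hcoh : ∀ α β, I β ≤ I α → y (n β) - y (n α) ∈ (I α : Submodule ℚ L) := by
    intro α β hβα
    rw [← sub_sub_sub_cancel_left _ _ (y (max (n α) (n β)))]
    exact sub_mem (hyI α _ _ le_rfl (le_max_left _ _))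
      (hβα (hyI β _ _ le_rfl (le_max_right _ _)))
  obtain ⟨x, hx⟩ := hC (fun α => y (n α)) hcoh
  have hxy : ∀ α m, n α ≤ m → x - y m ∈ (I α : Submodule ℚ L) := fun α m hm => by
    simpa using sub_mem (hx α) (hyI α _ m le_rfl hm)
  refine ⟨x, mem_encl_of_forall_sub_mem fun α => ⟨y (n α), hy _, hx α⟩,
    fun l => mem_encl_of_forall_sub_mem fun α => ⟨y (max (n α) l) - y l, ?_, ?_⟩⟩
  · exact hcauchy _ _ (le_max_right _ _)
  · rw [sub_sub_sub_cancel_right]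
    exact hxy α _ (le_max_left _ _)

theorem eq_zero_of_forall_mem_encl (hI : (⨅ α, I α) = ⊥) (hSI : ∀ α, ∃ n, S n ≤ I α)
    {x : L} (hx : ∀ l, x ∈ encl I (S l)) : x = 0 := by
  have hxI : ∀ α, x ∈ I α := fun α =>
    encl_le_of_le (hSI α).choose_spec (hx (hSI α).choose)
  simpa [hI] using (LieSubmodule.mem_iInf I).mpr hxI

end Encl

/-- In a complete enriched Lie algebra, `L^{(k)} = lim_ℓ
L^{(k)}/L^{(k+ℓ)}` (coherent families in the tower converge to a unique limit in
`L^{(k)}`); in particular (`k = 1`, i.e. index `0`) `L = lim_k L/L^{(k)}`; moreover each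
`L/L^{(k)}` is nilpotent, i.e. `L^k ⊆ L^{(k)}`.  Here `encl I (lcsIn ⊤ (k-1)) = L^{(k)}`. -/
theorem stmt8 {ι L : Type*} [LieRing L] [LieAlgebra ℚ L]
    (I : ι → LieIdeal ℚ L) (hE : IsEnriched I) (hC : IsCompleteWrt I) (k : ℕ) :
    (∀ y : ℕ → L,
      (∀ l, y l ∈ encl I (lcsIn (⊤ : Submodule ℚ L) k)) →
      (∀ l m, l ≤ m → y m - y l ∈ encl I (lcsIn (⊤ : Submodule ℚ L) (k + l))) →
      ∃ x ∈ encl I (lcsIn (⊤ : Submodule ℚ L) k),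
        ∀ l, x - y l ∈ encl I (lcsIn (⊤ : Submodule ℚ L) (k + l))) ∧
    (∀ x : L, (∀ l, x ∈ encl I (lcsIn (⊤ : Submodule ℚ L) (k + l))) → x = 0) ∧
    lcsIn (⊤ : Submodule ℚ L) k ≤ encl I (lcsIn (⊤ : Submodule ℚ L) k) := by
  obtain ⟨-, -, hnil, hI⟩ := hE
  have hS : Antitone fun l => lcsIn (⊤ : Submodule ℚ L) (k + l) :=
    lcsIn_top_antitone.comp_monotone fun _ _ h => Nat.add_le_add_left h k
  have hSI : ∀ α, ∃ n, lcsIn (⊤ : Submodule ℚ L) (k + n) ≤ I α := fun α => by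
    have := hnil α
    obtain ⟨n, hn⟩ := exists_lcsIn_top_le (I α)
    exact ⟨n, (lcsIn_top_antitone (Nat.le_add_left n k)).trans hn⟩
  exact ⟨exists_sub_mem_encl_of_cauchy hC hS hSI, fun _ => eq_zero_of_forall_mem_encl hI hSI,
    le_encl _⟩
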